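/- Let γ > 0 and suppose β_n = 1 − γ/ℓ_n (for n large enough that this lies in [0,1]). Then for every real c, lim_{n → ∞} d_n(t_n + c·w_n) = e^{−c}·(1 + e^{γ}); that is, a profile cutoff occurs at (t_n, w_n) with profile F(c) = e^{−c}(1 + e^{γ}). -/

import Mathlib

/-!
The first term of `d_n` equals `e^{-c}` at `t = t_n + c w_n`, since `ρ_{1,n} t_n = n`. At
`t = 1 + σ` the remaining sum is a Riemann sum, with step `e^{-n}`, of the decreasing function
`x ^ (-(1 + σ))`, whose primitive is `-x ^ (-σ) / σ`; it is therefore squeezed between differences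
of `x ^ (-σ) / σ` at points near `e^n` and near `e^n + 9^n e^{-n}`. With `s = n σ`, the left end
gives `(e^n) ^ (-σ) / σ = n e^{-s} / s`; the right end is at least `(9 / e) ^ n`, so, as `9 > e²`,
it gives that quantity times at most `exp (-(log 9 - 2) s) → 0`. Finally `s = ℓ_n - γ + c t_n`
and `e^{-ℓ_n} = log n / n`, so `n e^{-s} / s → e^{γ - c}`.
-/

open Filter Real
open scoped Topology

/-- `ℓ_n = log(n / log n)`. -/
noncomputable def ell (n : ℕ) : ℝ := Real.log (n / Real.log n)

/-- Distance to equilibrium of the Ornstein–Uhlenbeck example of Barrera–Ycart: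
`d_n(t) = Σ_{i=1}^{9^n} a_{i,n} e^{-ρ_{i,n} t}` with `a_{1,n} = e^n`,
`ρ_{1,n} = n/(1 + (β_n/n) ℓ_n)`, and for `2 ≤ i ≤ 9^n`:
`a_{i,n} = e^{-n}`, `ρ_{i,n} = log(e^n + (i-1) e^{-n})`. -/
noncomputable def dCut (β : ℕ → ℝ) (n : ℕ) (t : ℝ) : ℝ :=
  Real.exp n * Real.exp (-((n : ℝ) / (1 + β n / n * ell n)) * t) +
    ∑ i ∈ Finset.Icc (2 : ℕ) (9 ^ n),
      Real.exp (-(n : ℝ)) *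
        Real.exp (-Real.log (Real.exp n + ((i : ℝ) - 1) * Real.exp (-(n : ℝ))) * t)

/-- Cutoff location `t_n = 1 + β_n ℓ_n / n`. -/
noncomputable def cutT (β : ℕ → ℝ) (n : ℕ) : ℝ := 1 + β n * ell n / n

/-- Window width `w_n = t_n / n`. -/
noncomputable def cutW (β : ℕ → ℝ) (n : ℕ) : ℝ := cutT β n / n

/-- Correction term `r_n = ℓ_n w_n`. -/
noncomputable def cutR (β : ℕ → ℝ) (n : ℕ) : ℝ := ell n * cutW β n

open Finset Set

theorem AntitoneOn.comp_add_mul_Icc {f : ℝ → ℝ} {a h b : ℝ} (hh : 0 ≤ h)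
    (hf : AntitoneOn f (Icc a (a + h * b))) : AntitoneOn (fun y => f (a + h * y)) (Icc 0 b) :=
  fun x hx y hy hxy =>
    hf ⟨by nlinarith [hx.1], by nlinarith [hx.2]⟩ ⟨by nlinarith [hy.1], by nlinarith [hy.2]⟩
      (by gcongr)

theorem AntitoneOn.sum_mul_le_integral {f : ℝ → ℝ} {a h : ℝ} {N : ℕ} (hh : 0 ≤ h)
    (hf : AntitoneOn f (Icc a (a + h * N))) :
    ∑ k ∈ range N, h * f (a + h * (k + 1)) ≤ ∫ x in a..a + h * N, f x := by
  have hg := hf.comp_add_mul_Icc hh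
  rw [← zero_add (N : ℝ)] at hg
  have := mul_le_mul_of_nonneg_left hg.sum_le_integral hh
  rw [intervalIntegral.mul_integral_comp_add_mul, Finset.mul_sum] at this
  simpa only [mul_zero, add_zero, zero_add, Nat.cast_add, Nat.cast_one] using this

theorem AntitoneOn.integral_le_sum_mul {f : ℝ → ℝ} {a h : ℝ} {N : ℕ} (hh : 0 ≤ h)
    (hf : AntitoneOn f (Icc a (a + h * N))) :
    ∫ x in a..a + h * N, f x ≤ ∑ k ∈ range N, h * f (a + h * k) := by
  have hg := hf.comp_add_mul_Icc hh
  rw [← zero_add (N : ℝ)] at hg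
  have := mul_le_mul_of_nonneg_left hg.integral_le_sum hh
  rw [intervalIntegral.mul_integral_comp_add_mul, Finset.mul_sum] at this
  simpa only [mul_zero, add_zero, zero_add] using this

theorem integral_rpow_neg_one_sub {a b σ : ℝ} (ha : 0 < a) (hb : 0 < b) (hσ : σ ≠ 0) :
    ∫ x in a..b, x ^ (-(1 + σ)) = (a ^ (-σ) - b ^ (-σ)) / σ := by
  have h0 : (0 : ℝ) ∉ uIcc a b := fun h => by
    rcases Set.mem_uIcc.mp h with h | h <;> linarith [h.1]
  rw [integral_rpow (Or.inr ⟨by contrapose! hσ; linarith, h0⟩), show -(1 + σ) + 1 = -σ by ring,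
    ← neg_sub, div_neg, neg_div, neg_neg]

section RiemannSum

variable {A h σ : ℝ}

theorem sum_mul_rpow_neg_one_sub_le (N : ℕ) (hA : 0 < A) (hh : 0 ≤ h) (hσ : 0 < σ) :
    ∑ k ∈ range N, h * (A + h * (k + 1)) ^ (-(1 + σ)) ≤ (A ^ (-σ) - (A + h * N) ^ (-σ)) / σ := by
  rw [← integral_rpow_neg_one_sub hA (by positivity) hσ.ne']
  exact AntitoneOn.sum_mul_le_integral hh <|
    (Real.antitoneOn_rpow_Ioi_of_exponent_nonpos (by linarith)).mono fun x hx =>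
      lt_of_lt_of_le hA hx.1

theorem le_sum_mul_rpow_neg_one_sub (N : ℕ) (hA : 0 < A) (hh : 0 ≤ h) (hσ : 0 < σ) :
    ((A + h) ^ (-σ) - (A + h + h * N) ^ (-σ)) / σ ≤
      ∑ k ∈ range N, h * (A + h * (k + 1)) ^ (-(1 + σ)) := by
  rw [← integral_rpow_neg_one_sub (by positivity) (by positivity) hσ.ne']
  refine (AntitoneOn.integral_le_sum_mul hh <|
    (Real.antitoneOn_rpow_Ioi_of_exponent_nonpos (by linarith)).mono fun x hx =>
      lt_of_lt_of_le (by positivity) hx.1).trans_eq ?_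
  congr! 3 with k
  ring

end RiemannSum

noncomputable def dCutTail (n : ℕ) (t : ℝ) : ℝ :=
  ∑ i ∈ Finset.Icc (2 : ℕ) (9 ^ n),
    Real.exp (-(n : ℝ)) *
      Real.exp (-Real.log (Real.exp n + ((i : ℝ) - 1) * Real.exp (-(n : ℝ))) * t)

theorem dCut_cutT_add_mul_cutW {β : ℕ → ℝ} {n : ℕ} (hn : n ≠ 0) (hT : cutT β n ≠ 0) (c : ℝ) :
    dCut β n (cutT β n + c * cutW β n) = exp (-c) + dCutTail n (cutT β n + c * cutW β n) := by
  have hρ : (n : ℝ) / (1 + β n / n * ell n) * (cutT β n + c * cutW β n) = n + c := by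
    have : 1 + β n / n * ell n = cutT β n := by rw [cutT, div_mul_eq_mul_div]
    rw [this, cutW]
    field_simp
  rw [dCut, ← dCutTail, neg_mul, hρ, ← exp_add]
  ring_nf

theorem dCutTail_eq_sum_range (n : ℕ) (t : ℝ) :
    dCutTail n t = ∑ k ∈ range (9 ^ n - 1), exp (-n) * (exp n + exp (-n) * (k + 1)) ^ (-t) := by
  rw [dCutTail, ← Finset.Ico_add_one_right_eq_Icc, Finset.sum_Ico_eq_sum_range,
    show 9 ^ n + 1 - 2 = 9 ^ n - 1 by omega]
  refine Finset.sum_congr rfl fun k _ => ?_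
  rw [rpow_def_of_pos (by positivity)]
  push_cast
  ring_nf

theorem exp_rpow_neg_div_div {n : ℕ} (hn : n ≠ 0) (s : ℝ) :
    exp n ^ (-(s / n)) / (s / n) = n * exp (-s) / s := by
  rw [← exp_mul, mul_neg, mul_div_cancel₀ _ (by positivity), div_div_eq_mul_div, mul_comm]

theorem exp_add_rpow_neg_div_div {n : ℕ} (hn : n ≠ 0) (s : ℝ) {v : ℝ} (hv : 0 ≤ v) :
    (exp n + v) ^ (-(s / n)) / (s / n) = n * exp (-s) / s * (1 + v * exp (-n)) ^ (-(s / n)) := by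
  have : exp n + v = exp n * (1 + v * exp (-n)) := by
    rw [mul_add, mul_one, mul_left_comm, ← exp_add, add_neg_cancel, exp_zero, mul_one]
  rw [this, mul_rpow (exp_pos _).le (by positivity), mul_div_right_comm,
    exp_rpow_neg_div_div hn]

theorem tendsto_rpow_neg_div_natCast_of_exp_le {q s : ℕ → ℝ} {κ : ℝ} (hκ : 0 < κ)
    (hq : ∀ᶠ n : ℕ in atTop, exp (κ * n) ≤ q n) (hs : Tendsto s atTop atTop) :
    Tendsto (fun n => q n ^ (-(s n / n))) atTop (𝓝 0) := by
  have hlim : Tendsto (fun n => exp (-(κ * s n))) atTop (𝓝 0) :=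
    tendsto_exp_neg_atTop_nhds_zero.comp (hs.const_mul_atTop hκ)
  refine squeeze_zero' ?_ ?_ hlim
  · filter_upwards [hq] with n hn
    exact rpow_nonneg ((exp_pos _).le.trans hn) _
  · filter_upwards [hq, hs.eventually_ge_atTop 0, eventually_ne_atTop 0] with n hqn hsn hn
    calc q n ^ (-(s n / n)) ≤ exp (κ * n) ^ (-(s n / n)) :=
          rpow_le_rpow_of_nonpos (exp_pos _) hqn (neg_nonpos.2 (div_nonneg hsn n.cast_nonneg))
      _ = exp (-(κ * s n)) := by
          rw [← exp_mul]; congr 1; field_simp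

theorem two_lt_log_nine : 2 < log 9 := by
  rw [lt_log_iff_exp_lt (by norm_num), show (2:ℝ) = 1 + 1 by norm_num, exp_add]
  nlinarith [exp_one_lt_d9, exp_pos 1]

theorem exp_log_nine_sub_two_mul_le_one_add {n : ℕ} {v : ℝ}
    (hv : ((9 : ℝ) ^ n - 1) * exp (-n) ≤ v) :
    exp ((log 9 - 2) * n) ≤ 1 + v * exp (-n) := by
  have h9 : exp ((log 9 - 2) * n) = 9 ^ n * exp (-n) * exp (-n) := by
    rw [← exp_log (by norm_num : (0 : ℝ) < 9), ← exp_nat_mul, ← exp_add, ← exp_add, log_exp]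
    ring_nf
  have hle : exp (-n) * exp (-n) ≤ 1 := by
    rw [← exp_add, exp_le_one_iff]; have : (0:ℝ) ≤ n := n.cast_nonneg; linarith
  have := mul_le_mul_of_nonneg_right hv (exp_pos (-n)).le
  nlinarith

theorem tendsto_dCutTail {s : ℕ → ℝ} {L : ℝ} (hs : Tendsto s atTop atTop)
    (hsn : Tendsto (fun n => s n / n) atTop (𝓝 0))
    (hL : Tendsto (fun n => n * exp (-s n) / s n) atTop (𝓝 L)) :
    Tendsto (fun n => dCutTail n (1 + s n / n)) atTop (𝓝 L) := by
  have hcast (n : ℕ) : (((9 ^ n - 1 : ℕ) : ℝ)) = 9 ^ n - 1 := by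
    rw [Nat.cast_sub (Nat.one_le_pow _ _ (by norm_num))]; push_cast; ring
  have hsmall :
      Tendsto (fun n : ℕ => (1 + exp (-n) * exp (-n)) ^ (-(s n / n))) atTop (𝓝 1) := by
    have hexp : Tendsto (fun n : ℕ => exp (-n)) atTop (𝓝 0) :=
      tendsto_exp_neg_atTop_nhds_zero.comp tendsto_natCast_atTop_atTop
    simpa using (tendsto_const_nhds.add (hexp.mul hexp)).rpow hsn.neg (by norm_num)
  have hbig (v : ℕ → ℝ) (hv : ∀ n : ℕ, ((9 : ℝ) ^ n - 1) * exp (-n) ≤ v n) :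
      Tendsto (fun n : ℕ => (1 + v n * exp (-n)) ^ (-(s n / n))) atTop (𝓝 0) :=
    tendsto_rpow_neg_div_natCast_of_exp_le (sub_pos.2 two_lt_log_nine)
      (Eventually.of_forall fun n => exp_log_nine_sub_two_mul_le_one_add (hv n)) hs
  have hlower := hL.mul (hsmall.sub (hbig (fun n => exp (-n) + exp (-n) * ((9 ^ n - 1 : ℕ) : ℝ))
    fun n => by rw [hcast]; nlinarith [exp_pos (-(n : ℝ))]))
  have hupper := hL.sub (hL.mul (hbig (fun n => exp (-n) * ((9 ^ n - 1 : ℕ) : ℝ))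
    fun n => by rw [hcast, mul_comm]))
  rw [sub_zero, mul_one] at hlower
  rw [mul_zero, sub_zero] at hupper
  refine tendsto_of_tendsto_of_tendsto_of_le_of_le' hlower hupper ?_ ?_
  all_goals
    filter_upwards [hs.eventually_gt_atTop 0, eventually_ne_atTop 0] with n hsn hn
    rw [dCutTail_eq_sum_range]
  · rw [mul_sub]
    refine le_of_eq_of_le ?_
      (le_sum_mul_rpow_neg_one_sub _ (exp_pos _) (exp_pos _).le (by positivity))
    rw [add_assoc, sub_div, exp_add_rpow_neg_div_div hn _ (exp_pos _).le,
      exp_add_rpow_neg_div_div hn _ (by positivity)]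
  · refine (sum_mul_rpow_neg_one_sub_le _ (exp_pos _) (exp_pos _).le (by positivity)).trans_eq ?_
    rw [sub_div, exp_rpow_neg_div_div hn, exp_add_rpow_neg_div_div hn _ (by positivity)]

theorem tendsto_log_natCast_atTop : Tendsto (fun n : ℕ => log n) atTop atTop :=
  tendsto_log_atTop.comp tendsto_natCast_atTop_atTop

theorem exp_ell {n : ℕ} (hn : 2 ≤ n) : exp (ell n) = n / log n :=
  exp_log (div_pos (by positivity) (log_pos (by exact_mod_cast hn)))

theorem tendsto_ell_div_log : Tendsto (fun n : ℕ => ell n / log n) atTop (𝓝 1) := by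
  have := (isLittleO_log_id_atTop.tendsto_div_nhds_zero.comp tendsto_log_natCast_atTop).const_sub 1
  rw [sub_zero] at this
  refine this.congr' ?_
  filter_upwards [eventually_ge_atTop 2] with n hn
  have hlog_pos : 0 < log n := log_pos (by exact_mod_cast hn)
  rw [Function.comp_apply, id, ell, log_div (by positivity) hlog_pos.ne']
  field_simp

theorem tendsto_ell_atTop : Tendsto ell atTop atTop :=
  (tendsto_ell_div_log.pos_mul_atTop one_pos tendsto_log_natCast_atTop).congr' <| by
      filter_upwards [eventually_ge_atTop 2] with n hn
      rw [div_mul_cancel₀ _ (log_pos (by exact_mod_cast hn)).ne']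

theorem tendsto_ell_div_natCast : Tendsto (fun n : ℕ => ell n / n) atTop (𝓝 0) := by
  have := tendsto_ell_div_log.mul
    (isLittleO_log_id_atTop.tendsto_div_nhds_zero.comp tendsto_natCast_atTop_atTop)
  rw [one_mul] at this
  refine this.congr' ?_
  filter_upwards [eventually_ge_atTop 2] with n hn
  rw [Function.comp_apply, id, div_mul_div_cancel₀ (log_pos (by exact_mod_cast hn)).ne']

theorem tendsto_natCast_mul_exp_neg_ell_add_div {b : ℕ → ℝ} {b₀ : ℝ}
    (hb : Tendsto b atTop (𝓝 b₀)) :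
    Tendsto (fun n => n * exp (-(ell n + b n)) / (ell n + b n)) atTop (𝓝 (exp (-b₀))) := by
  have hden : Tendsto (fun n => (ell n + b n) / log n) atTop (𝓝 1) := by
    simpa [add_div] using tendsto_ell_div_log.add (hb.div_atTop tendsto_log_natCast_atTop)
  have := hb.neg.rexp.div hden one_ne_zero
  rw [div_one] at this
  refine this.congr' ?_
  filter_upwards [eventually_ge_atTop 2] with n hn
  have hlog_pos : 0 < log n := log_pos (by exact_mod_cast hn)
  rw [Pi.div_apply, neg_add, exp_add, exp_neg (ell n), exp_ell hn]
  field_simp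

section Cutoff

variable {γ : ℝ} {β : ℕ → ℝ}

theorem cutT_eq_one_add_div (hβ : ∀ n, β n = 1 - γ / ell n) {n : ℕ} (hn : ell n ≠ 0) :
    cutT β n = 1 + (ell n - γ) / n := by
  rw [cutT, hβ, sub_mul, div_mul_cancel₀ _ hn, one_mul]

theorem tendsto_cutT (hβ : ∀ n, β n = 1 - γ / ell n) : Tendsto (cutT β) atTop (𝓝 1) := by
  have := (tendsto_ell_div_natCast.sub
    ((tendsto_const_nhds (x := γ)).div_atTop tendsto_natCast_atTop_atTop)).const_add 1
  rw [sub_zero, add_zero] at this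
  refine this.congr' ?_
  filter_upwards [tendsto_ell_atTop.eventually_ne_atTop 0] with n hn
  rw [cutT_eq_one_add_div hβ hn, sub_div]

theorem cutT_add_mul_cutW (hβ : ∀ n, β n = 1 - γ / ell n) {n : ℕ} (hn : ell n ≠ 0) (c : ℝ) :
    cutT β n + c * cutW β n = 1 + (ell n + (c * cutT β n - γ)) / n := by
  rw [cutW, cutT_eq_one_add_div hβ hn]
  ring

end Cutoff

theorem profile_cutoff_beta_gamma_general
    (γ : ℝ)
    (β : ℕ → ℝ) (hβ : ∀ n, β n = 1 - γ / ell n) (c : ℝ) :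
    Tendsto (fun n => dCut β n (cutT β n + c * cutW β n)) atTop
      (𝓝 (Real.exp (-c) * (1 + Real.exp γ))) := by
  have hb : Tendsto (fun n => c * cutT β n - γ) atTop (𝓝 (c - γ)) := by
    simpa using ((tendsto_cutT hβ).const_mul c).sub_const γ
  have hs : Tendsto (fun n => ell n + (c * cutT β n - γ)) atTop atTop :=
    tendsto_ell_atTop.atTop_add hb
  have hsn : Tendsto (fun n : ℕ => (ell n + (c * cutT β n - γ)) / n) atTop (𝓝 0) := by
    simpa [add_div] using tendsto_ell_div_natCast.add (hb.div_atTop tendsto_natCast_atTop_atTop)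
  have htail := tendsto_dCutTail hs hsn (tendsto_natCast_mul_exp_neg_ell_add_div hb)
  rw [show exp (-c) * (1 + exp γ) = exp (-c) + exp (-(c - γ)) by
    rw [mul_add, mul_one, ← exp_add, neg_sub, sub_eq_neg_add]]
  refine (tendsto_const_nhds.add htail).congr' ?_
  filter_upwards [eventually_ne_atTop 0, (tendsto_cutT hβ).eventually_ne one_ne_zero,
    tendsto_ell_atTop.eventually_ne_atTop 0] with n hn hT hell
  rw [dCut_cutT_add_mul_cutW hn hT, cutT_add_mul_cutW hβ hell]

/-- Case `β_n = 1 - γ/ℓ_n` with `γ > 0` of Barrera–Ycart: a profile cutoff at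
`(t_n, w_n)` with profile `F(c) = e^{-c} (1 + e^{γ})` occurs: for every real `c`,
`d_n(t_n + c w_n) → e^{-c} (1 + e^{γ})`. -/
theorem profile_cutoff_beta_gamma
    (γ : ℝ) (hγ : 0 < γ)
    (β : ℕ → ℝ) (hβ : ∀ n, β n = 1 - γ / ell n) (c : ℝ) :
    Tendsto (fun n => dCut β n (cutT β n + c * cutW β n)) atTop
      (𝓝 (Real.exp (-c) * (1 + Real.exp γ))) :=
  profile_cutoff_beta_gamma_general γ β hβ c
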